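/- Let T be a nonnegative random variable and θ ∈ (0,1). Suppose there exist 0 < κ₁ ≤ κ₂ < ∞ and t₀ such that κ₁ t^{1-θ} ≤ ∫₀^t P[T > u] du ≤ κ₂ t^{1-θ} for all t ≥ t₀, and suppose t^θ P[T > t] is bounded above as t → ∞. Then lim inf_{t→∞} t^θ P[T > t] > 0. -/
import Mathlib


open Real Filter MeasureTheory

theorem liminf_persistence {Ω : Type*} [MeasurableSpace Ω] (μ : Measure Ω)
    [IsProbabilityMeasure μ] (T : Ω → ℝ) (hTmeas : Measurable T) (hTpos : ∀ ω, 0 ≤ T ω)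
    (θ : ℝ) (hθ : θ ∈ Set.Ioo (0:ℝ) 1)
    (κ₁ κ₂ t₀ : ℝ) (hκ₁ : 0 < κ₁) (hκ : κ₁ ≤ κ₂)
    (hint : ∀ t ≥ t₀,
      κ₁ * t ^ (1 - θ) ≤ (∫ u in (0:ℝ)..t, (μ {ω | u < T ω}).toReal) ∧
      (∫ u in (0:ℝ)..t, (μ {ω | u < T ω}).toReal) ≤ κ₂ * t ^ (1 - θ))
    (hbdd : ∃ M : ℝ, ∀ᶠ t in atTop, t ^ θ * (μ {ω | t < T ω}).toReal ≤ M) :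
    0 < Filter.liminf (fun t : ℝ => t ^ θ * (μ {ω | t < T ω}).toReal) atTop := by
  obtain ⟨hθ0, hθ1⟩ := hθ
  set g : ℝ → ℝ := fun u => (μ {ω | u < T ω}).toReal with hg
  have hganti : Antitone g := by
    intro s t hst
    exact ENNReal.toReal_mono (measure_ne_top μ _)
      (measure_mono (fun ω hω => lt_of_le_of_lt hst hω))
  have hgnn : ∀ u, 0 ≤ g u := fun u => ENNReal.toReal_nonneg
  have hgint : ∀ a b : ℝ, IntervalIntegrable g volume a b := fun a b =>
    (hganti.antitoneOn _).intervalIntegrable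
  have h1θ : 0 < 1 - θ := by linarith
  -- choose A large
  have htend : Tendsto (fun A : ℝ => κ₁ * (1 + A) ^ (1 - θ)) atTop atTop := by
    have h1 : Tendsto (fun A : ℝ => (1 + A) ^ (1 - θ)) atTop atTop :=
      (tendsto_rpow_atTop h1θ).comp (tendsto_atTop_add_const_left atTop 1 tendsto_id)
    exact h1.const_mul_atTop hκ₁
  obtain ⟨A, hA1, hAbig⟩ :
      ∃ A : ℝ, 1 ≤ A ∧ κ₂ + 1 ≤ κ₁ * (1 + A) ^ (1 - θ) := by
    obtain ⟨A, hA⟩ := ((htend.eventually_ge_atTop (κ₂ + 1)).and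
      (eventually_ge_atTop (1:ℝ))).exists
    exact ⟨A, hA.2, hA.1⟩
  have hApos : (0:ℝ) < A := lt_of_lt_of_le one_pos hA1
  have hev : ∀ᶠ t in atTop, A⁻¹ ≤ t ^ θ * g t := by
    filter_upwards [eventually_ge_atTop t₀, eventually_ge_atTop (1:ℝ)] with t ht₀ ht1
    have ht : (0:ℝ) < t := lt_of_lt_of_le one_pos ht1
    set b := t * (1 + A) with hbdef
    have htb : t ≤ b := by nlinarith
    have hbt₀ : t₀ ≤ b := le_trans ht₀ htb
    have hadd : (∫ u in (0:ℝ)..t, g u) + (∫ u in t..b, g u) = ∫ u in (0:ℝ)..b, g u :=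
      intervalIntegral.integral_add_adjacent_intervals (hgint 0 t) (hgint t b)
    -- lower bound on the middle integral
    have hbpow : b ^ (1 - θ) = t ^ (1 - θ) * (1 + A) ^ (1 - θ) :=
      Real.mul_rpow ht.le (by linarith)
    have hlow : t ^ (1 - θ) ≤ ∫ u in t..b, g u := by
      have h1 := (hint b hbt₀).1
      have h2 := (hint t ht₀).2
      have htpownn : (0:ℝ) ≤ t ^ (1 - θ) := Real.rpow_nonneg ht.le _
      have : κ₁ * b ^ (1 - θ) - κ₂ * t ^ (1 - θ) ≤ ∫ u in t..b, g u := by linarith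
      calc t ^ (1 - θ) = t ^ (1 - θ) * ((κ₂ + 1) - κ₂) := by ring
        _ ≤ t ^ (1 - θ) * (κ₁ * (1 + A) ^ (1 - θ) - κ₂) := by
            apply mul_le_mul_of_nonneg_left _ htpownn
            linarith
        _ = κ₁ * b ^ (1 - θ) - κ₂ * t ^ (1 - θ) := by rw [hbpow]; ring
        _ ≤ ∫ u in t..b, g u := this
    -- upper bound
    have hup : (∫ u in t..b, g u) ≤ t * A * g t := by
      have : (∫ u in t..b, g u) ≤ ∫ u in t..b, g t := by
        apply intervalIntegral.integral_mono_on htb (hgint t b)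
          (intervalIntegrable_const)
        intro x hx
        exact hganti hx.1
      calc (∫ u in t..b, g u) ≤ ∫ u in t..b, g t := this
        _ = (b - t) * g t := by rw [intervalIntegral.integral_const, smul_eq_mul]
        _ = t * A * g t := by rw [hbdef]; ring
    have hkey : t ^ (1 - θ) ≤ t * A * g t := le_trans hlow hup
    -- multiply by t ^ (θ - 1)
    have hmul : 1 ≤ A * (t ^ θ * g t) := by
      have hpnn : (0:ℝ) ≤ t ^ (θ - 1) := Real.rpow_nonneg ht.le _
      have h3 : t ^ (θ - 1) * t ^ (1 - θ) ≤ t ^ (θ - 1) * (t * A * g t) :=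
        mul_le_mul_of_nonneg_left hkey hpnn
      have e1 : t ^ (θ - 1) * t ^ (1 - θ) = 1 := by
        rw [← Real.rpow_add ht]; norm_num
      have e2 : t ^ (θ - 1) * t = t ^ θ := by
        nth_rewrite 2 [← Real.rpow_one t]
        rw [← Real.rpow_add ht]; norm_num
      calc (1:ℝ) = t ^ (θ - 1) * t ^ (1 - θ) := e1.symm
        _ ≤ t ^ (θ - 1) * (t * A * g t) := h3
        _ = (t ^ (θ - 1) * t) * A * g t := by ring
        _ = A * (t ^ θ * g t) := by rw [e2]; ring
    rw [inv_le_iff_one_le_mul₀ hApos]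
    linarith [hmul]
  obtain ⟨M, hM⟩ := hbdd
  have hbd : IsBoundedUnder (· ≤ ·) atTop (fun t : ℝ => t ^ θ * g t) :=
    ⟨M, by simpa [eventually_map] using hM⟩
  have hcobdd : IsCoboundedUnder (· ≥ ·) atTop (fun t : ℝ => t ^ θ * g t) :=
    hbd.isCoboundedUnder_ge
  have := le_liminf_of_le hcobdd hev
  exact lt_of_lt_of_le (by positivity) this
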